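/- Let A be an n×n irreducible nonnegative real matrix (n ≥ 2) and let x ∈ ℝ^n have all entries positive. Suppose x is not a Perron vector of A. (i) If there exists an index i_1 ∈ {1,…,n} such that (A²x)_{i_1}/(Ax)_{i_1} = max_{1≤i≤n} (A²x)_i/(Ax)_i and every entry of the i_1-th row of A is nonzero, then max_{1≤i≤n} (A²x)_i/(Ax)_i < max_{1≤i≤n} (Ax)_i/x_i. (ii) If there exists an index i_2 ∈ {1,…,n} such that (A²x)_{i_2}/(Ax)_{i_2} = min_{1≤i≤n} (A²x)_i/(Ax)_i and every entry of the i_2-th row of A is nonzero, then min_{1≤i≤n} (Ax)_i/x_i < min_{1≤i≤n} (A²x)_i/(Ax)_i. -/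

import Mathlib

/-!
Let `M = max_i (Ax)_i / x_i`, so that `Ax ≤ M x`. The inequality is strict in some coordinate:
otherwise `x` would be a positive eigenvector of the nonnegative matrix `A`, and the
Collatz–Wielandt comparison shows that the eigenvalue of a positive eigenvector is the spectral
radius, making `x` a Perron vector. Multiplying by the row `i₁`, whose entries are all positive,
keeps the strict inequality: `(A²x)_{i₁} < M (Ax)_{i₁}`. The minimum is handled symmetrically.
-/

open Matrix

/-- A square matrix is irreducible if no permutation similarity puts it in block
upper triangular form; equivalently, for every nonempty proper subset `S` of indices
there are `i ∈ S` and `j ∉ S` with `A i j ≠ 0`. -/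
def IsIrreducibleMatrix {n : ℕ} (A : Matrix (Fin n) (Fin n) ℝ) : Prop :=
  ∀ S : Finset (Fin n), S.Nonempty → S ≠ Finset.univ → ∃ i ∈ S, ∃ j, j ∉ S ∧ A i j ≠ 0

/-- The Perron value (spectral radius) of a real square matrix: the supremum of the
absolute values of its complex eigenvalues (roots of the characteristic polynomial). -/
noncomputable def perronValue {n : ℕ} (A : Matrix (Fin n) (Fin n) ℝ) : ℝ :=
  sSup {r : ℝ | ∃ μ : ℂ, ((A.map Complex.ofReal).charpoly).IsRoot μ ∧ r = ‖μ‖}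

/-- A Perron vector of `A`: an eigenvector associated with the Perron value of `A`. -/
def IsPerronVector {n : ℕ} (A : Matrix (Fin n) (Fin n) ℝ) (x : Fin n → ℝ) : Prop :=
  x ≠ 0 ∧ A.mulVec x = perronValue A • x

namespace Matrix

variable {ι : Type*} [Fintype ι]

theorem isRoot_charpoly_iff_exists_mulVec_eq_smul {K : Type*} [Field K] [DecidableEq ι]
    (B : Matrix ι ι K) (μ : K) : B.charpoly.IsRoot μ ↔ ∃ v ≠ 0, B *ᵥ v = μ • v := by
  rw [← charpoly_toLin', ← Module.End.hasEigenvalue_iff_isRoot_charpoly]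
  constructor
  · intro h
    obtain ⟨v, hv⟩ := h.exists_hasEigenvector
    exact ⟨v, hv.2, hv.apply_eq_smul⟩
  · rintro ⟨v, hv, hBv⟩
    exact Module.End.hasEigenvalue_of_hasEigenvector ⟨Module.End.mem_eigenspace_iff.2 hBv, hv⟩

theorem dotProduct_lt_dotProduct_of_pos_left {w u v : ι → ℝ} (hw : ∀ j, 0 < w j)
    (huv : u < v) : w ⬝ᵥ u < w ⬝ᵥ v := by
  obtain ⟨hle, j, hj⟩ := Pi.lt_def.1 huv
  exact Finset.sum_lt_sum (fun k _ => mul_le_mul_of_nonneg_left (hle k) (hw k).le)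
    ⟨j, Finset.mem_univ j, mul_lt_mul_of_pos_left hj (hw j)⟩

variable {A : Matrix ι ι ℝ}

theorem mulVec_mono_of_nonneg (hA : ∀ i j, 0 ≤ A i j) {u v : ι → ℝ} (huv : u ≤ v) :
    A *ᵥ u ≤ A *ᵥ v :=
  fun i => dotProduct_le_dotProduct_of_nonneg_left huv (hA i)

theorem mulVec_apply_lt_mulVec_apply {i : ι} (hrow : ∀ j, 0 < A i j) {u v : ι → ℝ}
    (huv : u < v) : (A *ᵥ u) i < (A *ᵥ v) i :=
  dotProduct_lt_dotProduct_of_pos_left hrow huv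

theorem mulVec_apply_pos_of_row_pos {i : ι} (hrow : ∀ j, 0 < A i j) {x : ι → ℝ}
    (hx : ∀ j, 0 < x j) : 0 < (A *ᵥ x) i := by
  simpa using
    mulVec_apply_lt_mulVec_apply (u := 0) hrow (Pi.lt_def.2 ⟨fun j => (hx j).le, i, hx i⟩)

end Matrix

section RatioBounds

variable {ι : Type*} [Finite ι] {x : ι → ℝ}

theorem le_iSup_div_smul (hx : ∀ i, 0 < x i) (y : ι → ℝ) : y ≤ (⨆ i, y i / x i) • x :=
  fun j => (div_le_iff₀ (hx j)).1 (le_ciSup (Finite.bddAbove_range fun i => y i / x i) j)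

theorem iInf_div_smul_le (hx : ∀ i, 0 < x i) (y : ι → ℝ) : (⨅ i, y i / x i) • x ≤ y :=
  fun j => (le_div_iff₀ (hx j)).1 (ciInf_le (Finite.bddBelow_range fun i => y i / x i) j)

end RatioBounds

section CollatzWielandt

variable {ι : Type*} [Fintype ι] {A : Matrix ι ι ℝ} {x : ι → ℝ}

theorem le_of_smul_le_mulVec_of_mulVec_le_smul (hA : ∀ i j, 0 ≤ A i j) (hx : ∀ i, 0 < x i)
    {c : ℝ} (hAx : A *ᵥ x ≤ c • x) {w : ι → ℝ} (hw : 0 ≤ w) (hw0 : w ≠ 0) {r : ℝ}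
    (hAw : r • w ≤ A *ᵥ w) : r ≤ c := by
  obtain ⟨j, hj⟩ := Function.ne_iff.1 hw0
  have : Nonempty ι := ⟨j⟩
  obtain ⟨i, hi⟩ := exists_eq_ciSup_of_finite (f := fun k => w k / x k)
  have hwx : w ≤ (w i / x i) • x := hi ▸ le_iSup_div_smul hx w
  have hwi : 0 < w i := by
    have hj_pos : 0 < w j / x j := div_pos ((hw j).lt_of_ne' hj) (hx j)
    have := hj_pos.trans_le ((div_le_iff₀ (hx j)).2 (hwx j))
    exact (div_pos_iff_of_pos_right (hx i)).1 this
  refine le_of_mul_le_mul_right ?_ hwi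
  calc r * w i ≤ (A *ᵥ w) i := hAw i
    _ ≤ (A *ᵥ ((w i / x i) • x)) i := mulVec_mono_of_nonneg hA hwx i
    _ = w i / x i * (A *ᵥ x) i := by rw [mulVec_smul]; rfl
    _ ≤ w i / x i * (c * x i) := mul_le_mul_of_nonneg_left (hAx i) (div_pos hwi (hx i)).le
    _ = c * w i := by field_simp [(hx i).ne']

theorem norm_le_of_map_ofReal_mulVec_eq_smul (hA : ∀ i j, 0 ≤ A i j) (hx : ∀ i, 0 < x i)
    {c : ℝ} (hAx : A *ᵥ x ≤ c • x) {μ : ℂ} {v : ι → ℂ} (hv : v ≠ 0)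
    (hμ : A.map Complex.ofReal *ᵥ v = μ • v) : ‖μ‖ ≤ c := by
  refine le_of_smul_le_mulVec_of_mulVec_le_smul hA hx hAx (w := fun j => ‖v j‖)
    (fun j => norm_nonneg _) (fun h => hv (funext fun j => norm_eq_zero.1 (congr_fun h j)))
    fun i => ?_
  calc ‖μ‖ * ‖v i‖ = ‖∑ j, (A i j : ℂ) * v j‖ := by
        rw [← norm_mul, ← smul_eq_mul, ← Pi.smul_apply, ← hμ]; rfl
    _ ≤ ∑ j, A i j * ‖v j‖ := by
        refine (norm_sum_le _ _).trans (Finset.sum_le_sum fun j _ => ?_)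
        rw [norm_mul, Complex.norm_real, Real.norm_of_nonneg (hA i j)]

end CollatzWielandt

theorem perronValue_eq_of_mulVec_eq_smul {n : ℕ} [Nonempty (Fin n)]
    {A : Matrix (Fin n) (Fin n) ℝ} (hA : ∀ i j, 0 ≤ A i j) {x : Fin n → ℝ}
    (hx : ∀ i, 0 < x i) {c : ℝ} (hAx : A *ᵥ x = c • x) : perronValue A = c := by
  obtain ⟨i⟩ := ‹Nonempty (Fin n)›
  have hc : 0 ≤ c := by
    have : 0 ≤ c * x i := by
      rw [← smul_eq_mul, ← Pi.smul_apply, ← hAx]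
      exact dotProduct_nonneg_of_nonneg (hA i) fun j => (hx j).le
    exact nonneg_of_mul_nonneg_left this (hx i)
  refine IsGreatest.csSup_eq ⟨⟨c, ?_, by simp [abs_of_nonneg hc]⟩, ?_⟩
  · refine (isRoot_charpoly_iff_exists_mulVec_eq_smul _ _).2 ⟨Complex.ofReal ∘ x,
      fun h => (hx i).ne' (by simpa using congr_fun h i), funext fun j => ?_⟩
    calc _ = Complex.ofRealHom ((A *ᵥ x) j) := (RingHom.map_mulVec _ A x j).symm
      _ = _ := by simp [hAx]
  · rintro r ⟨μ, hμ, rfl⟩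
    obtain ⟨v, hv, hAv⟩ := (isRoot_charpoly_iff_exists_mulVec_eq_smul _ _).1 hμ
    exact norm_le_of_map_ofReal_mulVec_eq_smul hA hx hAx.le hv hAv

theorem isPerronVector_of_mulVec_eq_smul {n : ℕ} [Nonempty (Fin n)]
    {A : Matrix (Fin n) (Fin n) ℝ} (hA : ∀ i j, 0 ≤ A i j) {x : Fin n → ℝ}
    (hx : ∀ i, 0 < x i) {c : ℝ} (hAx : A *ᵥ x = c • x) : IsPerronVector A x := by
  obtain ⟨i⟩ := ‹Nonempty (Fin n)›
  exact ⟨fun h => (hx i).ne' (congr_fun h i),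
    perronValue_eq_of_mulVec_eq_smul hA hx hAx ▸ hAx⟩

section TwoStepRatios

variable {ι : Type*} [Fintype ι] {A : Matrix ι ι ℝ} {x : ι → ℝ} {i : ι}

theorem mulVec_mulVec_div_lt_iSup (hA : ∀ i j, 0 ≤ A i j) (hrow : ∀ j, A i j ≠ 0)
    (hx : ∀ j, 0 < x j) (hxA : ∀ c : ℝ, A *ᵥ x ≠ c • x) :
    (A *ᵥ (A *ᵥ x)) i / (A *ᵥ x) i < ⨆ j, (A *ᵥ x) j / x j := by
  set M := ⨆ j, (A *ᵥ x) j / x j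
  have hrow_pos : ∀ j, 0 < A i j := fun j => (hA i j).lt_of_ne' (hrow j)
  have hlt : A *ᵥ x < M • x := (le_iSup_div_smul hx _).lt_of_ne (hxA M)
  rw [div_lt_iff₀ (mulVec_apply_pos_of_row_pos hrow_pos hx)]
  calc (A *ᵥ (A *ᵥ x)) i < (A *ᵥ (M • x)) i := mulVec_apply_lt_mulVec_apply hrow_pos hlt
    _ = M * (A *ᵥ x) i := by rw [mulVec_smul]; rfl

theorem iInf_lt_mulVec_mulVec_div (hA : ∀ i j, 0 ≤ A i j) (hrow : ∀ j, A i j ≠ 0)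
    (hx : ∀ j, 0 < x j) (hxA : ∀ c : ℝ, A *ᵥ x ≠ c • x) :
    ⨅ j, (A *ᵥ x) j / x j < (A *ᵥ (A *ᵥ x)) i / (A *ᵥ x) i := by
  set m := ⨅ j, (A *ᵥ x) j / x j
  have hrow_pos : ∀ j, 0 < A i j := fun j => (hA i j).lt_of_ne' (hrow j)
  have hlt : m • x < A *ᵥ x := (iInf_div_smul_le hx _).lt_of_ne (hxA m).symm
  rw [lt_div_iff₀ (mulVec_apply_pos_of_row_pos hrow_pos hx)]
  calc m * (A *ᵥ x) i = (A *ᵥ (m • x)) i := by rw [mulVec_smul]; rfl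
    _ < (A *ᵥ (A *ᵥ x)) i := mulVec_apply_lt_mulVec_apply hrow_pos hlt

end TwoStepRatios

theorem ratio_strict_monotone_of_positive_row_general {n : ℕ}
    (A : Matrix (Fin n) (Fin n) ℝ) (x : Fin n → ℝ)
    (hnonneg : ∀ i j, 0 ≤ A i j) (hx : ∀ i, 0 < x i)
    (hnp : ¬ IsPerronVector A x) :
    ((∃ i₁ : Fin n,
        A.mulVec (A.mulVec x) i₁ / A.mulVec x i₁
            = (⨆ i, A.mulVec (A.mulVec x) i / A.mulVec x i) ∧
        ∀ j, A i₁ j ≠ 0) →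
      (⨆ i, A.mulVec (A.mulVec x) i / A.mulVec x i) < ⨆ i, A.mulVec x i / x i) ∧
    ((∃ i₂ : Fin n,
        A.mulVec (A.mulVec x) i₂ / A.mulVec x i₂
            = (⨅ i, A.mulVec (A.mulVec x) i / A.mulVec x i) ∧
        ∀ j, A i₂ j ≠ 0) →
      (⨅ i, A.mulVec x i / x i) < ⨅ i, A.mulVec (A.mulVec x) i / A.mulVec x i) := by
  have not_eigenvector (i : Fin n) (c : ℝ) : A *ᵥ x ≠ c • x :=
    have : Nonempty (Fin n) := ⟨i⟩
    fun h => hnp (isPerronVector_of_mulVec_eq_smul hnonneg hx h)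
  exact ⟨fun ⟨i, hi, hrow⟩ => hi ▸
      mulVec_mulVec_div_lt_iSup hnonneg hrow hx (not_eigenvector i),
    fun ⟨i, hi, hrow⟩ => hi ▸ iInf_lt_mulVec_mulVec_div hnonneg hrow hx (not_eigenvector i)⟩

/-- Let `A` be `n × n` (`n ≥ 2`) irreducible and nonnegative, `x` entrywise
positive and not a Perron vector of `A`.
(i) If some `i₁` attains `max_i (A²x)_i/(Ax)_i` and row `i₁` of `A` has no zero entry, then
`max_i (A²x)_i/(Ax)_i < max_i (Ax)_i/x_i`.
(ii) If some `i₂` attains `min_i (A²x)_i/(Ax)_i` and row `i₂` of `A` has no zero entry, then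
`min_i (Ax)_i/x_i < min_i (A²x)_i/(Ax)_i`. -/
theorem ratio_strict_monotone_of_positive_row {n : ℕ} (hn : 2 ≤ n)
    (A : Matrix (Fin n) (Fin n) ℝ) (x : Fin n → ℝ)
    (hirr : IsIrreducibleMatrix A) (hnonneg : ∀ i j, 0 ≤ A i j) (hx : ∀ i, 0 < x i)
    (hnp : ¬ IsPerronVector A x) :
    ((∃ i₁ : Fin n,
        A.mulVec (A.mulVec x) i₁ / A.mulVec x i₁
            = (⨆ i, A.mulVec (A.mulVec x) i / A.mulVec x i) ∧
        ∀ j, A i₁ j ≠ 0) →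
      (⨆ i, A.mulVec (A.mulVec x) i / A.mulVec x i) < ⨆ i, A.mulVec x i / x i) ∧
    ((∃ i₂ : Fin n,
        A.mulVec (A.mulVec x) i₂ / A.mulVec x i₂
            = (⨅ i, A.mulVec (A.mulVec x) i / A.mulVec x i) ∧
        ∀ j, A i₂ j ≠ 0) →
      (⨅ i, A.mulVec x i / x i) < ⨅ i, A.mulVec (A.mulVec x) i / A.mulVec x i) :=
  ratio_strict_monotone_of_positive_row_general A x hnonneg hx hnp
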